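/- Let Ω ≻ 0 symmetric, Y ∈ ℝ^{m×n}, d ∈ ℝ^m, ζ > ε > 0 with ζ - ε - dᵀd > 0, and suppose there exists μ with 0 < μ < ζ - ε - dᵀd such that μΩ - YᵀY - (Yᵀd dᵀY)/(ζ - ε - dᵀd - μ) ⪰ 0. Then the controller u(x) = YΩ⁻¹(x-c) + d satisfies ‖u(x)‖² ≤ ζ - ε for all x with (x-c)ᵀΩ⁻¹(x-c) ≤ 1. -/

import Mathlib

open Matrix

lemma vecMulVec_mulVec' {m : ℕ} (w : Fin m → ℝ) (u v : Fin m → ℝ) :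
    Matrix.vecMulVec w u *ᵥ v = (u ⬝ᵥ v) • w := by
  ext i
  simp [Matrix.vecMulVec, Matrix.mulVec, dotProduct, Finset.mul_sum, mul_comm,
    mul_left_comm]

/-- 2-norm input bound: if `0 < μ < ζ - ε - dᵀd` and
`μΩ - YᵀY - (Yᵀd dᵀY)/(ζ - ε - dᵀd - μ) ⪰ 0`, then the controller
`u(x) = YΩ⁻¹(x-c) + d` satisfies `‖u(x)‖² ≤ ζ - ε` on the ellipsoid
`{x : (x-c)ᵀΩ⁻¹(x-c) ≤ 1}`. -/
theorem input_two_norm_bound (n m : ℕ) (Ω : Matrix (Fin n) (Fin n) ℝ)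
    (hΩ : Ω.PosDef) (Y : Matrix (Fin m) (Fin n) ℝ) (d : Fin m → ℝ) (c : Fin n → ℝ)
    (ζ ε μ : ℝ) (hε : 0 < ε) (hζε : ε < ζ) (hden : 0 < ζ - ε - d ⬝ᵥ d)
    (hμ0 : 0 < μ) (hμ : μ < ζ - ε - d ⬝ᵥ d)
    (h : (μ • Ω - Yᵀ * Y -
      (ζ - ε - d ⬝ᵥ d - μ)⁻¹ • Matrix.vecMulVec (Yᵀ *ᵥ d) (Yᵀ *ᵥ d)).PosSemidef) :
    ∀ x : Fin n → ℝ, (x - c) ⬝ᵥ (Ω⁻¹ *ᵥ (x - c)) ≤ 1 →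
      ((Y * Ω⁻¹) *ᵥ (x - c) + d) ⬝ᵥ ((Y * Ω⁻¹) *ᵥ (x - c) + d) ≤ ζ - ε := by
  intro x hx
  have hs : 0 < ζ - ε - d ⬝ᵥ d - μ := by linarith
  set s : ℝ := ζ - ε - d ⬝ᵥ d - μ with hs_def
  set v : Fin n → ℝ := Ω⁻¹ *ᵥ (x - c) with hv
  have hxc : Ω *ᵥ v = x - c := by
    rw [hv, Matrix.mulVec_mulVec, Matrix.mul_nonsing_inv _
      (isUnit_iff_ne_zero.mpr hΩ.det_pos.ne'), Matrix.one_mulVec]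
  have hq : v ⬝ᵥ (Ω *ᵥ v) ≤ 1 := by
    rw [dotProduct_comm, hxc]; exact hx
  have hpsd := h.dotProduct_mulVec_nonneg v
  have hw : (Yᵀ *ᵥ d) ⬝ᵥ v = d ⬝ᵥ (Y *ᵥ v) := by
    rw [Matrix.mulVec_transpose, ← Matrix.dotProduct_mulVec]
  have e1 : v ⬝ᵥ ((Yᵀ * Y) *ᵥ v) = (Y *ᵥ v) ⬝ᵥ (Y *ᵥ v) := by
    rw [← Matrix.mulVec_mulVec, Matrix.dotProduct_mulVec, ← Matrix.mulVec_transpose,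
      Matrix.transpose_transpose]
  have e2 : v ⬝ᵥ (Matrix.vecMulVec (Yᵀ *ᵥ d) (Yᵀ *ᵥ d) *ᵥ v)
      = (d ⬝ᵥ (Y *ᵥ v)) ^ 2 := by
    rw [vecMulVec_mulVec']
    simp only [dotProduct_smul, smul_eq_mul]
    rw [hw, dotProduct_comm v, hw]; ring
  have hkey : (Y *ᵥ v) ⬝ᵥ (Y *ᵥ v) + s⁻¹ * (d ⬝ᵥ (Y *ᵥ v)) ^ 2
      ≤ μ * (v ⬝ᵥ (Ω *ᵥ v)) := by
    simp only [star_trivial, Matrix.sub_mulVec, Matrix.smul_mulVec,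
      dotProduct_sub, dotProduct_smul, e1, e2, smul_eq_mul] at hpsd
    linarith
  have hgoal : ((Y * Ω⁻¹) *ᵥ (x - c) + d) ⬝ᵥ ((Y * Ω⁻¹) *ᵥ (x - c) + d)
      = (Y *ᵥ v) ⬝ᵥ (Y *ᵥ v) + 2 * (d ⬝ᵥ (Y *ᵥ v)) + d ⬝ᵥ d := by
    have hYv : (Y * Ω⁻¹) *ᵥ (x - c) = Y *ᵥ v := by
      rw [← Matrix.mulVec_mulVec, hv]
    rw [hYv, dotProduct_add, add_dotProduct, add_dotProduct,
      dotProduct_comm d (Y *ᵥ v)]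
    ring
  rw [hgoal]
  have hμq : μ * (v ⬝ᵥ (Ω *ᵥ v)) ≤ μ := by nlinarith
  have hsq : 0 ≤ s⁻¹ * (d ⬝ᵥ (Y *ᵥ v) - s) ^ 2 := by positivity
  have hsinv : s⁻¹ * s = 1 := inv_mul_cancel₀ hs.ne'
  nlinarith [hkey, hμq, hsq, hsinv]
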